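/- Suppose λ_i ≠ 0. Then (s,s') ∈ Z_i^λ(d,v) if and only if (s',s) ∈ Z_i^{λ'}(d,v'). In particular, if b_i(s')a_i(s') = λ'_i·Id, a_i(s')b_i(s') = a_i(s)b_i(s) − λ_i·Id_{T_i}, and the sequence 0 → V'_i →^{a_i(s')} T_i →^{b_i(s)} V_i → 0 is exact, then the sequence 0 → V_i →^{a_i(s)} T_i →^{b_i(s')} V'_i → 0 is also exact. -/

import Mathlib

open scoped BigOperators

noncomputable section

structure QuiverShape (I Hh : Type) : Type where
  src : Hh → I
  tgt : Hh → I
  noloop : ∀ h, src h ≠ tgt h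
  rev : Hh → Hh
  rev_ne : ∀ h, rev h ≠ h
  rev_rev : ∀ h, rev (rev h) = h
  src_rev : ∀ h, src (rev h) = tgt h
  tgt_rev : ∀ h, tgt (rev h) = src h
  eps : Hh → ℂ
  eps_pm : ∀ h, eps h = 1 ∨ eps h = -1
  eps_rev : ∀ h, eps (rev h) = - eps h

namespace QuiverShape

variable {I Hh : Type}

/-- The representation space `S(d,v)`: a triple `(B, γ, δ)`. -/
abbrev Rep (Q : QuiverShape I Hh) (d v : I → ℕ) : Type :=
  ((h : Hh) → Matrix (Fin (v (Q.tgt h))) (Fin (v (Q.src h))) ℂ)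
  × ((i : I) → Matrix (Fin (v i)) (Fin (d i)) ℂ)
  × ((i : I) → Matrix (Fin (d i)) (Fin (v i)) ℂ)

/-- The group `G_v = ∏ᵢ GL(Vᵢ)`. -/
abbrev GV (v : I → ℕ) : Type := (i : I) → (Matrix (Fin (v i)) (Fin (v i)) ℂ)ˣ

/-- The action of `G_v` on `S(d,v)`. -/
def act (Q : QuiverShape I Hh) {d v : I → ℕ} (g : GV v) (s : Q.Rep d v) : Q.Rep d v :=
  ⟨fun h => ((g (Q.tgt h)).val * s.1 h) * ((g (Q.src h))⁻¹ : (Matrix _ _ ℂ)ˣ).val,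
   fun i => (g i).val * s.2.1 i,
   fun i => s.2.2 i * ((g i)⁻¹ : (Matrix _ _ ℂ)ˣ).val⟩

/-- `B_{h̄}`, pulled back to a matrix `V_{h₁} → V_{h₀}` via the identities
`(h̄)₀ = h₁`, `(h̄)₁ = h₀`. -/
def Bbar (Q : QuiverShape I Hh) {d v : I → ℕ} (s : Q.Rep d v) (h : Hh) :
    Matrix (Fin (v (Q.src h))) (Fin (v (Q.tgt h))) ℂ :=
  Matrix.reindex (finCongr (congrArg v (Q.tgt_rev h))) (finCongr (congrArg v (Q.src_rev h)))
    (s.1 (Q.rev h))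

/-- The `i`-th component of the moment map:
`μᵢ(s) = ∑_{h : h₁ = i} ε(h) B_h B_{h̄} + γᵢ δᵢ`. -/
def mu (Q : QuiverShape I Hh) [Fintype Hh] [DecidableEq I] {d v : I → ℕ}
    (s : Q.Rep d v) (i : I) : Matrix (Fin (v i)) (Fin (v i)) ℂ :=
  (∑ h : {h : Hh // Q.tgt h = i},
      Q.eps h.1 • (Matrix.reindex (finCongr (congrArg v h.2)) (finCongr (congrArg v h.2))
        (s.1 h.1 * Q.Bbar s h.1)))
  + s.2.1 i * s.2.2 i

/-- `Λ_λ(d,v) = μ⁻¹(λ)`. -/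
def lamSet (Q : QuiverShape I Hh) [Fintype Hh] [DecidableEq I] (lam : I → ℂ) (d v : I → ℕ) :
    Set (Q.Rep d v) :=
  {s | ∀ i, Q.mu s i = lam i • (1 : Matrix (Fin (v i)) (Fin (v i)) ℂ)}

/-- Index type for the coordinates (matrix entries) of `S(d,v)`. -/
abbrev Coord (Q : QuiverShape I Hh) (d v : I → ℕ) : Type :=
  ((h : Hh) × (Fin (v (Q.tgt h)) × Fin (v (Q.src h))))
  ⊕ (((i : I) × (Fin (v i) × Fin (d i)))
  ⊕ ((i : I) × (Fin (d i) × Fin (v i))))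

/-- The coordinates of a point of `S(d,v)`. -/
def coords (Q : QuiverShape I Hh) {d v : I → ℕ} (s : Q.Rep d v) : Q.Coord d v → ℂ
  | Sum.inl ⟨h, rc⟩ => s.1 h rc.1 rc.2
  | Sum.inr (Sum.inl ⟨i, rc⟩) => s.2.1 i rc.1 rc.2
  | Sum.inr (Sum.inr ⟨i, rc⟩) => s.2.2 i rc.1 rc.2

/-- A function `S(d,v) → ℂ` is polynomial if it is given by a polynomial in the
matrix entries. -/
def IsPolyFun (Q : QuiverShape I Hh) {d v : I → ℕ} (f : Q.Rep d v → ℂ) : Prop :=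
  ∃ P : MvPolynomial (Q.Coord d v) ℂ, ∀ s, f s = MvPolynomial.eval (Q.coords s) P

/-- The character `χ_m(g) = ∏ᵢ det(gᵢ)^{mᵢ}`. -/
def chi [Fintype I] {v : I → ℕ} (m : I → ℤ) (g : GV v) : ℂ :=
  ∏ i, ((g i : Matrix (Fin (v i)) (Fin (v i)) ℂ).det) ^ (m i)

/-- `χ_m`-semistability. -/
def Semistable (Q : QuiverShape I Hh) [Fintype I] {d v : I → ℕ} (m : I → ℤ)
    (s : Q.Rep d v) : Prop :=
  ∃ n : ℕ, 0 < n ∧ ∃ f : Q.Rep d v → ℂ, Q.IsPolyFun f ∧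
      (∀ (g : GV v) (t : Q.Rep d v), f (Q.act g t) = (chi m g) ^ n * f t) ∧ f s ≠ 0

/-- `a_{ij}` = number of arrows from `i` to `j`. -/
def aCount (Q : QuiverShape I Hh) (i j : I) : ℕ :=
  Nat.card {h : Hh // Q.src h = i ∧ Q.tgt h = j}

/-- The generalized Cartan matrix `c_{ij} = 2δ_{ij} - a_{ij}`. -/
def cartan (Q : QuiverShape I Hh) [DecidableEq I] (i j : I) : ℤ :=
  2 * (if i = j then 1 else 0) - (Q.aCount i j : ℤ)

/-- `T_i = D_i ⊕ ⊕_{h : h₁ = i} V_{h₀}`. -/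
abbrev TSpace (Q : QuiverShape I Hh) (d v : I → ℕ) (i : I) : Type :=
  (Fin (d i) → ℂ) × ((h : {h : Hh // Q.tgt h = i}) → (Fin (v (Q.src h.1)) → ℂ))

/-- Transport between coordinate spaces of equal dimensions. -/
def vcast {m n : ℕ} (hmn : m = n) : (Fin m → ℂ) ≃ₗ[ℂ] (Fin n → ℂ) :=
  LinearEquiv.funCongrLeft ℂ ℂ (finCongr hmn.symm)

/-- `a_i(s) = (δ_i, (B_{h̄})_{h : h₁ = i}) : V_i → T_i`. -/
def aMap (Q : QuiverShape I Hh) [DecidableEq I] {d v : I → ℕ}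
    (s : Q.Rep d v) (i : I) : (Fin (v i) → ℂ) →ₗ[ℂ] Q.TSpace d v i :=
  LinearMap.prod (Matrix.mulVecLin (s.2.2 i))
    (LinearMap.pi fun h =>
      Matrix.mulVecLin (Q.Bbar s h.1) ∘ₗ (vcast (congrArg v h.2)).symm.toLinearMap)

/-- `b_i(s) = (γ_i, (ε(h) B_h)_{h : h₁ = i}) : T_i → V_i`. -/
def bMap (Q : QuiverShape I Hh) [Fintype Hh] [DecidableEq I] {d v : I → ℕ}
    (s : Q.Rep d v) (i : I) : Q.TSpace d v i →ₗ[ℂ] (Fin (v i) → ℂ) :=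
  (Matrix.mulVecLin (s.2.1 i)).comp (LinearMap.fst ℂ _ _) +
    ∑ h : {h : Hh // Q.tgt h = i},
      Q.eps h.1 •
        ((vcast (congrArg v h.2)).toLinearMap ∘ₗ Matrix.mulVecLin (s.1 h.1) ∘ₗ
          (LinearMap.proj h) ∘ₗ (LinearMap.snd ℂ _ _))

/-- The canonical identification `T_i(d,v') = T_i(d,v)` when `v'` agrees with `v`
away from `i` (and the graph has no loops). -/
def Tcast (Q : QuiverShape I Hh) {d v v' : I → ℕ} (i : I)
    (hv' : ∀ j, j ≠ i → v' j = v j) : Q.TSpace d v' i ≃ₗ[ℂ] Q.TSpace d v i :=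
  (LinearEquiv.refl ℂ (Fin (d i) → ℂ)).prodCongr
    (LinearEquiv.piCongrRight fun h =>
      vcast (hv' (Q.src h.1) (fun he => Q.noloop h.1 (he.trans h.2.symm))))

/-- Exactness of `0 → M₁ → M₂ → M₃ → 0`. -/
def ShortExact {M₁ M₂ M₃ : Type} [AddCommGroup M₁] [Module ℂ M₁] [AddCommGroup M₂]
    [Module ℂ M₂] [AddCommGroup M₃] [Module ℂ M₃]
    (f : M₁ →ₗ[ℂ] M₂) (g : M₂ →ₗ[ℂ] M₃) : Prop :=
  Function.Injective f ∧ Function.Surjective g ∧ LinearMap.range f = LinearMap.ker g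

/-- Conditions (1)–(5) defining `Z_i^λ(d,v)`. -/
def ZConds (Q : QuiverShape I Hh) [Fintype Hh] [DecidableEq I] {d v v' : I → ℕ} (i : I)
    (hv' : ∀ j, j ≠ i → v' j = v j) (lam : I → ℂ)
    (s : Q.Rep d v) (s' : Q.Rep d v') : Prop :=
  (∀ h (hs : Q.src h ≠ i) (ht : Q.tgt h ≠ i),
      s.1 h = Matrix.reindex (finCongr (hv' _ ht)) (finCongr (hv' _ hs)) (s'.1 h)) ∧
  (∀ j (hj : j ≠ i),
      s.2.1 j = Matrix.reindex (finCongr (hv' j hj)) (Equiv.refl _) (s'.2.1 j)) ∧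
  (∀ j (hj : j ≠ i),
      s.2.2 j = Matrix.reindex (Equiv.refl _) (finCongr (hv' j hj)) (s'.2.2 j)) ∧
  ShortExact ((Q.Tcast i hv').toLinearMap ∘ₗ Q.aMap s' i) (Q.bMap s i) ∧
  ((Q.Tcast i hv').toLinearMap ∘ₗ (Q.aMap s' i ∘ₗ Q.bMap s' i) ∘ₗ (Q.Tcast i hv').symm.toLinearMap
      = Q.aMap s i ∘ₗ Q.bMap s i - lam i • LinearMap.id)

/-- The variety `Z_i^λ(d,v)`: conditions (1)–(5) together with condition (6). -/
def ZRel (Q : QuiverShape I Hh) [Fintype Hh] [DecidableEq I] {d v v' : I → ℕ} (i : I)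
    (hv' : ∀ j, j ≠ i → v' j = v j) (lam lam' : I → ℂ)
    (s : Q.Rep d v) (s' : Q.Rep d v') : Prop :=
  Q.ZConds i hv' lam s s' ∧ s ∈ Q.lamSet lam d v ∧ s' ∈ Q.lamSet lam' d v'

end QuiverShape

end

/-!
Since the graph has no loops, `c_ii = 2` and hence `λ'_i = -λ_i`. Write `a, b` for `a_i(s), b_i(s)`
and `a', b'` for `a_i(s'), b_i(s')`. Applying `b` and `b'` to `a'b' = ab - λ_i`, and using
`b a' = 0`, `b'a' = -λ_i` and the surjectivity of `b`, gives `ba = λ_i` and `b'a = 0`. As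
`λ_i ≠ 0`, this makes `a` injective and `b'` surjective, and any `x ∈ ker b'` equals
`a (λ_i⁻¹ b x)`: the sequence `V_i → T_i → V'_i` is exact. Conjugating `a'b' = ab - λ_i` by the
identification of the two copies of `T_i` gives `ab = a'b' - λ'_i`, and the remaining conditions
are symmetric.
-/
namespace QuiverShape

section LinearAlgebra

variable {V T V' : Type} [AddCommGroup V] [Module ℂ V] [AddCommGroup T] [Module ℂ T]
  [AddCommGroup V'] [Module ℂ V'] {W : Type} [AddCommGroup W] [Module ℂ W]

theorem ShortExact.swap {a : V →ₗ[ℂ] T} {b : T →ₗ[ℂ] V} {A : V' →ₗ[ℂ] T} {β : T →ₗ[ℂ] V'}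
    {c : ℂ} (hc : c ≠ 0) (hβA : β ∘ₗ A = (-c) • LinearMap.id)
    (hAβ : A ∘ₗ β = a ∘ₗ b - c • LinearMap.id) (hAb : ShortExact A b) :
    ShortExact a β := by
  obtain ⟨-, hb, hrange⟩ := hAb
  have hβA' (y : V') : β (A y) = -c • y := LinearMap.congr_fun hβA y
  have hAβ' (x : T) : A (β x) = a (b x) - c • x := LinearMap.congr_fun hAβ x
  have hbA (y : V') : b (A y) = 0 := LinearMap.mem_ker.1 (hrange ▸ LinearMap.mem_range_self A y)
  have hba (y : V) : b (a y) = c • y := by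
    obtain ⟨x, rfl⟩ := hb y
    simpa [hAβ', sub_eq_zero] using hbA (β x)
  have hβa (y : V) : β (a y) = 0 := by
    obtain ⟨x, rfl⟩ := hb y
    simpa [hAβ'] using hβA' (β x)
  refine ⟨fun y z hyz => smul_right_injective V hc (by simp only [← hba, hyz]),
    fun y => ⟨A ((-c)⁻¹ • y), by
      rw [hβA', smul_smul, mul_inv_cancel₀ (neg_ne_zero.2 hc), one_smul]⟩,
    le_antisymm ?_ fun x hx => ⟨c⁻¹ • b x, ?_⟩⟩
  · rintro _ ⟨y, rfl⟩
    exact hβa y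
  · have hx : a (b x) = c • x := by
      simpa [LinearMap.mem_ker.1 hx, sub_eq_zero] using (hAβ' x).symm
    rw [map_smul, hx, smul_smul, inv_mul_cancel₀ hc, one_smul]

theorem ShortExact.equiv_comp {f : V →ₗ[ℂ] T} {g : V' →ₗ[ℂ] W} (e : T ≃ₗ[ℂ] V')
    (h : ShortExact f (g ∘ₗ e.toLinearMap)) : ShortExact (e.toLinearMap ∘ₗ f) g := by
  obtain ⟨hf, hg, hfg⟩ := h
  refine ⟨e.injective.comp hf, fun y => let ⟨x, hx⟩ := hg y; ⟨e x, hx⟩, ?_⟩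
  rw [LinearMap.range_comp, hfg, LinearMap.ker_comp,
    Submodule.map_comap_eq_of_surjective e.surjective]

end LinearAlgebra

variable {I Hh : Type}

@[simp]
lemma vcast_apply {m n : ℕ} (hmn : m = n) (x : Fin m → ℂ) :
    vcast hmn x = x ∘ finCongr hmn.symm :=
  rfl

@[simp]
lemma vcast_symm_apply {m n : ℕ} (hmn : m = n) (x : Fin n → ℂ) :
    (vcast hmn).symm x = x ∘ finCongr hmn :=
  rfl

lemma Tcast_symm (Q : QuiverShape I Hh) {d v v' : I → ℕ} (i : I)
    (hv' : ∀ j, j ≠ i → v' j = v j) :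
    (Q.Tcast (d := d) i hv').symm = Q.Tcast i fun j hj => (hv' j hj).symm :=
  rfl

lemma cartan_self (Q : QuiverShape I Hh) [DecidableEq I] (i : I) : Q.cartan i i = 2 := by
  have : IsEmpty {h : Hh // Q.src h = i ∧ Q.tgt h = i} :=
    ⟨fun ⟨h, hs, ht⟩ => Q.noloop h (hs.trans ht.symm)⟩
  simp [cartan, aCount]

lemma bMap_comp_aMap (Q : QuiverShape I Hh) [Fintype Hh] [DecidableEq I] {d v : I → ℕ}
    (s : Q.Rep d v) (i : I) : Q.bMap s i ∘ₗ Q.aMap s i = (Q.mu s i).mulVecLin := by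
  refine LinearMap.ext fun x => ?_
  simp [mu, bMap, aMap, add_comm, Matrix.submatrix_mulVec_equiv]

lemma bMap_comp_aMap_of_mem_lamSet (Q : QuiverShape I Hh) [Fintype Hh] [DecidableEq I]
    {d v : I → ℕ} {lam : I → ℂ} {s : Q.Rep d v} (hs : s ∈ Q.lamSet lam d v) (i : I) :
    Q.bMap s i ∘ₗ Q.aMap s i = lam i • LinearMap.id := by
  ext x
  simp [bMap_comp_aMap, hs i]

lemma shortExact_aMap_bMap_swap (Q : QuiverShape I Hh) [Fintype Hh] [DecidableEq I]
    {d v v' : I → ℕ} {lam lam' : I → ℂ} (i : I) (hv' : ∀ j, j ≠ i → v' j = v j)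
    (hneg : lam' i = -lam i) (hlam : lam i ≠ 0) {t : Q.Rep d v} {t' : Q.Rep d v'}
    (hba' : Q.bMap t' i ∘ₗ Q.aMap t' i = lam' i • LinearMap.id)
    (hab : (Q.Tcast i hv').toLinearMap ∘ₗ (Q.aMap t' i ∘ₗ Q.bMap t' i) ∘ₗ
        (Q.Tcast i hv').symm.toLinearMap = Q.aMap t i ∘ₗ Q.bMap t i - lam i • LinearMap.id)
    (hexact : ShortExact ((Q.Tcast i hv').toLinearMap ∘ₗ Q.aMap t' i) (Q.bMap t i)) :
    ShortExact (Q.aMap t i) (Q.bMap t' i ∘ₗ (Q.Tcast i hv').symm.toLinearMap) := by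
  refine hexact.swap hlam ?_ hab
  rw [← hneg, ← hba']
  ext
  simp

theorem ZRel_swap (Q : QuiverShape I Hh) [Fintype Hh] [DecidableEq I]
    {d v v' : I → ℕ} {lam lam' : I → ℂ} (i : I) (hv' : ∀ j, j ≠ i → v' j = v j)
    (hneg : lam' i = -lam i) (hlam : lam i ≠ 0) {s : Q.Rep d v} {s' : Q.Rep d v'}
    (hZ : Q.ZRel i hv' lam lam' s s') :
    Q.ZRel i (fun j hj => (hv' j hj).symm) lam' lam s' s := by
  obtain ⟨⟨hB, hγ, hδ, hexact, hab⟩, hs, hs'⟩ := hZ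
  have hab' : Q.aMap s i ∘ₗ Q.bMap s i =
      (Q.Tcast i hv').toLinearMap ∘ₗ (Q.aMap s' i ∘ₗ Q.bMap s' i) ∘ₗ
        (Q.Tcast i hv').symm.toLinearMap + lam i • LinearMap.id := by
    rw [hab, sub_add_cancel]
  refine ⟨⟨fun h hs ht => ?_, fun j hj => ?_, fun j hj => ?_, ?_, ?_⟩, hs', hs⟩
  · rw [hB h hs ht]; ext; simp
  · rw [hγ j hj]; ext; simp
  · rw [hδ j hj]; ext; simp
  · exact (Q.shortExact_aMap_bMap_swap i hv' hneg hlam (Q.bMap_comp_aMap_of_mem_lamSet hs' i)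
      hab hexact).equiv_comp (Q.Tcast i hv').symm
  · rw [← Q.Tcast_symm i hv', LinearEquiv.symm_symm, hab', hneg]
    refine LinearMap.ext fun x => ?_
    simp

end QuiverShape

theorem ZRel_symm_iff_general
    {I Hh : Type} [DecidableEq I] [Fintype Hh]
    (Q : QuiverShape I Hh) (d v v' : I → ℕ) (lam lam' : I → ℂ) (i : I)
    (hv' : ∀ j, j ≠ i → v' j = v j)
    (hlam' : ∀ j, lam' j = lam j - (Q.cartan i j : ℂ) * lam i)
    (hlami : lam i ≠ 0) :
    (∀ (s : Q.Rep d v) (s' : Q.Rep d v'),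
      Q.ZRel i hv' lam lam' s s' ↔
        Q.ZRel i (fun j hj => (hv' j hj).symm) lam' lam s' s) ∧
    (∀ (t : Q.Rep d v) (t' : Q.Rep d v'),
      Q.bMap t' i ∘ₗ Q.aMap t' i = lam' i • LinearMap.id →
      ((Q.Tcast i hv').toLinearMap ∘ₗ (Q.aMap t' i ∘ₗ Q.bMap t' i) ∘ₗ
          (Q.Tcast i hv').symm.toLinearMap
        = Q.aMap t i ∘ₗ Q.bMap t i - lam i • LinearMap.id) →
      QuiverShape.ShortExact ((Q.Tcast i hv').toLinearMap ∘ₗ Q.aMap t' i) (Q.bMap t i) →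
      QuiverShape.ShortExact (Q.aMap t i)
        (Q.bMap t' i ∘ₗ (Q.Tcast i hv').symm.toLinearMap)) := by
  have hneg : lam' i = -lam i := by
    rw [hlam', Q.cartan_self]
    push_cast
    ring
  have hneg' : lam i = -lam' i := by rw [hneg, neg_neg]
  have hlami' : lam' i ≠ 0 := by rwa [hneg, neg_ne_zero]
  exact ⟨fun _ _ => ⟨Q.ZRel_swap i hv' hneg hlami, Q.ZRel_swap i _ hneg' hlami'⟩,
    fun _ _ => Q.shortExact_aMap_bMap_swap i hv' hneg hlami⟩

theorem ZRel_symm_iff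
    {I Hh : Type} [Fintype I] [DecidableEq I] [Fintype Hh] [DecidableEq Hh]
    (Q : QuiverShape I Hh) (d v v' : I → ℕ) (lam lam' : I → ℂ) (i : I)
    (hv' : ∀ j, j ≠ i → v' j = v j)
    (hvi : (v' i : ℤ) = (d i : ℤ) - (v i : ℤ) +
      ∑ j ∈ Finset.univ.filter (fun j => j ≠ i), (Q.aCount i j : ℤ) * (v j : ℤ))
    (hlam' : ∀ j, lam' j = lam j - (Q.cartan i j : ℂ) * lam i)
    (hlami : lam i ≠ 0) :
    (∀ (s : Q.Rep d v) (s' : Q.Rep d v'),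
      Q.ZRel i hv' lam lam' s s' ↔
        Q.ZRel i (fun j hj => (hv' j hj).symm) lam' lam s' s) ∧
    (∀ (t : Q.Rep d v) (t' : Q.Rep d v'),
      Q.bMap t' i ∘ₗ Q.aMap t' i = lam' i • LinearMap.id →
      ((Q.Tcast i hv').toLinearMap ∘ₗ (Q.aMap t' i ∘ₗ Q.bMap t' i) ∘ₗ
          (Q.Tcast i hv').symm.toLinearMap
        = Q.aMap t i ∘ₗ Q.bMap t i - lam i • LinearMap.id) →
      QuiverShape.ShortExact ((Q.Tcast i hv').toLinearMap ∘ₗ Q.aMap t' i) (Q.bMap t i) →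
      QuiverShape.ShortExact (Q.aMap t i)
        (Q.bMap t' i ∘ₗ (Q.Tcast i hv').symm.toLinearMap)) :=
  ZRel_symm_iff_general Q d v v' lam lam' i hv' hlam' hlami
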